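/- arXiv:2109.12929 — 3 statements merged into one kernel-verified Lean document; each statement's English description precedes it below -/
import Mathlib

section
/- Let s be a prime, α a positive integer, and a an integer with |a| > 1. Suppose r is a prime with multiplicative order of a modulo r equal to s^α (i.e., r is a primitive prime divisor of a^{s^α} - 1), and let r* be the largest power of r dividing a^{s^α} - 1. If r* divides the least common multiple A = lcm(a^{n₁} - ε₁, …, a^{n_l} - ε_l), where each ε_i ∈ {1, -1} and each n_i is a positive integer, then either there exists i with s^α dividing n_i, or s = 2 and there exists i with ε_i = -1 and s^{α-1} dividing n_i. -/
/-! Since `r` divides `a ^ s ^ α - 1 ≠ 0`, it divides `r*` and hence the lcm, so as a prime it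
divides some `a ^ nᵢ - εᵢ`. Modulo `r` this reads `a ^ nᵢ = εᵢ = ±1`, so the order `s ^ α` of `a`
divides `nᵢ` or `2 nᵢ`; in the latter case either `s` is odd and `s ^ α ∣ nᵢ` anyway, or `s = 2`
and `2 ^ (α - 1) ∣ nᵢ`. -/

lemma Int.pow_sub_one_ne_zero {a : ℤ} (ha : 1 < |a|) {k : ℕ} (hk : k ≠ 0) : a ^ k - 1 ≠ 0 := by
  intro h
  have h1 : |a ^ k| = 1 := by rw [sub_eq_zero.mp h, abs_one]
  rw [abs_pow_eq_one a hk] at h1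
  exact ha.ne' h1

lemma Nat.Prime.dvd_pow_factorization {p N : ℕ} (hp : p.Prime) (hN : N ≠ 0) (hpN : p ∣ N) :
    p ∣ p ^ N.factorization p :=
  dvd_pow_self p (hp.factorization_pos_of_dvd hN hpN).ne'

lemma Prime.exists_dvd_of_dvd_finset_lcm {ι α : Type*} [CommMonoidWithZero α]
    [NormalizedGCDMonoid α] {p : α} (hp : Prime p) {s : Finset ι} {f : ι → α}
    (h : p ∣ s.lcm f) : ∃ i ∈ s, p ∣ f i :=
  hp.exists_mem_finset_dvd (h.trans (s.lcm_dvd_prod f))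

lemma orderOf_dvd_two_mul_of_pow_eq_neg_one {M : Type*} [Monoid M] [HasDistribNeg M] {x : M}
    {n : ℕ} (h : x ^ n = -1) : orderOf x ∣ 2 * n :=
  orderOf_dvd_of_pow_eq_one (by rw [mul_comm, pow_mul, h, neg_one_sq])

lemma Nat.pow_pred_dvd_of_pow_dvd_mul_self {p k m : ℕ} (hp : 0 < p) (h : p ^ k ∣ p * m) :
    p ^ (k - 1) ∣ m := by
  cases k with
  | zero => exact one_dvd m
  | succ k => simpa [pow_succ', Nat.mul_dvd_mul_iff_left hp] using h

lemma Nat.Prime.pow_dvd_or_of_pow_dvd_two_mul {s α m : ℕ} (hs : s.Prime) (h : s ^ α ∣ 2 * m) :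
    s ^ α ∣ m ∨ (s = 2 ∧ s ^ (α - 1) ∣ m) := by
  by_cases hs2 : s = 2
  · subst hs2
    exact Or.inr ⟨rfl, Nat.pow_pred_dvd_of_pow_dvd_mul_self two_pos h⟩
  · have hcop : Nat.Coprime (s ^ α) 2 :=
      Nat.Coprime.pow_left α ((Nat.coprime_primes hs Nat.prime_two).mpr hs2)
    exact Or.inl (hcop.dvd_of_dvd_mul_left h)

theorem stmt_3_general (s : ℕ) (hs : s.Prime) (α : ℕ) (a : ℤ) (ha : 1 < |a|)
    (r : ℕ) (hr : r.Prime) (hord : orderOf (a : ZMod r) = s ^ α)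
    (rstar : ℕ) (hrstar : rstar = r ^ ((a ^ s ^ α - 1).natAbs.factorization r))
    (l : ℕ) (n : Fin l → ℕ) (ε : Fin l → ℤ)
    (hε : ∀ i, ε i = 1 ∨ ε i = -1)
    (hdvd : (rstar : ℤ) ∣ Finset.univ.lcm (fun i => a ^ n i - ε i)) :
    (∃ i, s ^ α ∣ n i) ∨ (s = 2 ∧ ∃ i, ε i = -1 ∧ s ^ (α - 1) ∣ n i) := by
  have hr_dvd : (r : ℤ) ∣ a ^ s ^ α - 1 := by
    rw [← ZMod.intCast_zmod_eq_zero_iff_dvd]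
    push_cast
    rw [← hord, pow_orderOf_eq_one, sub_self]
  have hr_rstar : (r : ℤ) ∣ rstar := by
    rw [hrstar]
    exact_mod_cast hr.dvd_pow_factorization
      (Int.natAbs_ne_zero.mpr (Int.pow_sub_one_ne_zero ha (pow_ne_zero α hs.ne_zero)))
      (Int.natCast_dvd.mp hr_dvd)
  obtain ⟨i, -, hi⟩ :=
    Prime.exists_dvd_of_dvd_finset_lcm (Nat.prime_iff_prime_int.mp hr) (hr_rstar.trans hdvd)
  have hpow : (a : ZMod r) ^ n i = (ε i : ZMod r) := by
    exact_mod_cast ((ZMod.intCast_eq_intCast_iff_dvd_sub _ _ _).mpr hi).symm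
  rcases hε i with hεi | hεi <;> rw [hεi] at hpow
  · exact Or.inl ⟨i, hord ▸ orderOf_dvd_of_pow_eq_one (by simpa using hpow)⟩
  · have hdvd_two_mul := hord ▸ orderOf_dvd_two_mul_of_pow_eq_neg_one (by simpa using hpow)
    rcases hs.pow_dvd_or_of_pow_dvd_two_mul hdvd_two_mul with h | ⟨rfl, h⟩
    · exact Or.inl ⟨i, h⟩
    · exact Or.inr ⟨rfl, i, hεi, h⟩

theorem stmt_3 (s : ℕ) (hs : s.Prime) (α : ℕ) (hα : 0 < α) (a : ℤ) (ha : 1 < |a|)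
    (r : ℕ) (hr : r.Prime) (hord : orderOf (a : ZMod r) = s ^ α)
    (rstar : ℕ) (hrstar : rstar = r ^ ((a ^ s ^ α - 1).natAbs.factorization r))
    (l : ℕ) (n : Fin l → ℕ) (ε : Fin l → ℤ)
    (hn : ∀ i, 0 < n i) (hε : ∀ i, ε i = 1 ∨ ε i = -1)
    (hdvd : (rstar : ℤ) ∣ Finset.univ.lcm (fun i => a ^ n i - ε i)) :
    (∃ i, s ^ α ∣ n i) ∨ (s = 2 ∧ ∃ i, ε i = -1 ∧ s ^ (α - 1) ∣ n i) :=
  stmt_3_general s hs α a ha r hr hord rstar hrstar l n ε hε hdvd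
end

section
/- Define l(n) for a positive integer n by l(1) = 0 and l(n) = p₁^{α₁} + ⋯ + p_k^{α_k} if n = p₁^{α₁}⋯p_k^{α_k} is the prime factorization of n with distinct primes p_i and α_i > 0. Then for every positive integers n and m, the symmetric group Sym_n contains an element of order m if and only if l(m) ≤ n. -/
/-- `l(n)`: the sum of the maximal prime powers `p^α` in the factorization of `n`;
`l(1) = 0`. -/
def minDeg (n : ℕ) : ℕ := n.factorization.sum (fun p k => p ^ k)

-- sum ≤ prod for finsets of nats each ≥ 2
lemma sum_le_prod_of_two_le {α : Type*} (s : Finset α) (f : α → ℕ)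
    (h : ∀ a ∈ s, 2 ≤ f a) : ∑ a ∈ s, f a ≤ ∏ a ∈ s, f a := by
  classical
  induction s using Finset.induction_on with
  | empty => simp
  | @insert a s ha ih =>
    rw [Finset.sum_insert ha, Finset.prod_insert ha]
    have h2 : 2 ≤ f a := h a (Finset.mem_insert_self a s)
    have hih := ih (fun b hb => h b (Finset.mem_insert_of_mem hb))
    rcases Finset.eq_empty_or_nonempty s with rfl | ⟨b, hb⟩
    · simp
    · have hP2 : 2 ≤ ∏ b ∈ s, f b :=
        le_trans (h b (Finset.mem_insert_of_mem hb))
          (Finset.single_le_prod' (fun c hc => le_trans one_le_two (h c (Finset.mem_insert_of_mem hc))) hb)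
      calc f a + ∑ b ∈ s, f b ≤ f a + ∏ b ∈ s, f b := by omega
        _ ≤ f a * ∏ b ∈ s, f b := by nlinarith

lemma minDeg_lcm_le (a b : ℕ) (ha : a ≠ 0) (hb : b ≠ 0) :
    minDeg (Nat.lcm a b) ≤ a + minDeg b := by
  classical
  unfold minDeg
  rw [Nat.factorization_lcm ha hb, Finsupp.sum, Finsupp.sum]
  set fa := a.factorization with hfa
  set fb := b.factorization with hfb
  set S := (fa ⊔ fb).support with hS
  rw [← Finset.sum_filter_add_sum_filter_not S (fun p => fb p < fa p)
      (fun p => p ^ ((fa ⊔ fb) p))]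
  have key : ∀ p ∈ S, (fa ⊔ fb) p = max (fa p) (fb p) := fun p _ => Finsupp.sup_apply _ _ _
  gcongr ?_ + ?_ -- split goal
  · -- sum over S1 ≤ a
    calc ∑ p ∈ S.filter (fun p => fb p < fa p), p ^ ((fa ⊔ fb) p)
        = ∑ p ∈ S.filter (fun p => fb p < fa p), p ^ (fa p) := by
          apply Finset.sum_congr rfl
          intro p hp
          rw [Finsupp.sup_apply]
          have := (Finset.mem_filter.mp hp).2
          congr 1
          omega
      _ ≤ ∏ p ∈ S.filter (fun p => fb p < fa p), p ^ (fa p) := by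
          apply sum_le_prod_of_two_le
          intro p hp
          have hmem := Finset.mem_filter.mp hp
          have hfap : 1 ≤ fa p := by omega
          have hprime : p.Prime := by
            apply Nat.prime_of_mem_primeFactors
            rw [← Nat.support_factorization, ← hfa, Finsupp.mem_support_iff]
            omega
          calc 2 ≤ p := hprime.two_le
            _ = p ^ 1 := (pow_one p).symm
            _ ≤ p ^ (fa p) := Nat.pow_le_pow_right hprime.pos hfap
      _ ≤ a := by
          apply Nat.le_of_dvd (Nat.pos_of_ne_zero ha)
          have hsub : S.filter (fun p => fb p < fa p) ⊆ fa.support := by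
            intro p hp
            have := (Finset.mem_filter.mp hp).2
            rw [Finsupp.mem_support_iff]
            omega
          calc (∏ p ∈ S.filter (fun p => fb p < fa p), p ^ (fa p))
              ∣ ∏ p ∈ fa.support, p ^ (fa p) :=
                Finset.prod_dvd_prod_of_subset _ _ _ hsub
            _ = a := by
                rw [hfa]
                exact Nat.factorization_prod_pow_eq_self ha
  · -- sum over S2 ≤ minDeg b
    calc ∑ p ∈ S.filter (fun p => ¬ fb p < fa p), p ^ ((fa ⊔ fb) p)
        = ∑ p ∈ S.filter (fun p => ¬ fb p < fa p), p ^ (fb p) := by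
          apply Finset.sum_congr rfl
          intro p hp
          rw [Finsupp.sup_apply]
          have := (Finset.mem_filter.mp hp).2
          congr 1
          omega
      _ ≤ ∑ p ∈ fb.support, p ^ (fb p) := by
          apply Finset.sum_le_sum_of_subset_of_nonneg
          · intro p hp
            have hmem := Finset.mem_filter.mp hp
            have hpS : (fa ⊔ fb) p ≠ 0 := Finsupp.mem_support_iff.mp hmem.1
            rw [Finsupp.sup_apply] at hpS
            rw [Finsupp.mem_support_iff]
            have := hmem.2
            omega
          · intros; exact Nat.zero_le _

lemma multiset_lcm_ne_zero (s : Multiset ℕ) (h : ∀ x ∈ s, x ≠ 0) : s.lcm ≠ 0 :=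
  fun h0 => h 0 ((Multiset.lcm_eq_zero_iff s).mp h0) rfl

lemma minDeg_multiset_lcm_le (s : Multiset ℕ) (h : ∀ x ∈ s, x ≠ 0) :
    minDeg s.lcm ≤ s.sum := by
  induction s using Multiset.induction with
  | empty => simp [Multiset.lcm_zero, minDeg]
  | cons a s ih =>
    rw [Multiset.lcm_cons, Multiset.sum_cons]
    have ha : a ≠ 0 := h a (Multiset.mem_cons_self a s)
    have hs : ∀ x ∈ s, x ≠ 0 := fun x hx => h x (Multiset.mem_cons_of_mem hx)
    calc minDeg (Nat.lcm a s.lcm) ≤ a + minDeg s.lcm :=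
          minDeg_lcm_le a s.lcm ha (multiset_lcm_ne_zero s hs)
      _ ≤ a + s.sum := by have := ih hs; omega


theorem stmt_6 (n m : ℕ) (hm : 0 < m) :
    (∃ σ : Equiv.Perm (Fin n), orderOf σ = m) ↔ minDeg m ≤ n := by
  constructor
  · rintro ⟨σ, rfl⟩
    have h1 : minDeg (orderOf σ) ≤ σ.cycleType.sum := by
      rw [← Equiv.Perm.lcm_cycleType]
      exact minDeg_multiset_lcm_le _ (fun x hx => by
        have := Equiv.Perm.two_le_of_mem_cycleType hx; omega)
    calc minDeg (orderOf σ) ≤ σ.cycleType.sum := h1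
      _ = σ.support.card := Equiv.Perm.sum_cycleType σ
      _ ≤ Fintype.card (Fin n) := σ.support.card_le_univ
      _ = n := Fintype.card_fin n
  · intro h
    classical
    set ms : Multiset ℕ := m.factorization.support.val.map
      (fun p => p ^ m.factorization p) with hms
    have hsum : ms.sum = minDeg m := rfl
    have h2 : ∀ x ∈ ms, 2 ≤ x := by
      intro x hx
      obtain ⟨p, hp, rfl⟩ := Multiset.mem_map.mp hx
      have hpmem : p ∈ m.factorization.support := hp
      have hprime : p.Prime := Nat.prime_of_mem_primeFactors
        (by rwa [← Nat.support_factorization])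
      have hk : 1 ≤ m.factorization p := by
        have := Finsupp.mem_support_iff.mp hpmem; omega
      calc 2 ≤ p := hprime.two_le
        _ = p ^ 1 := (pow_one p).symm
        _ ≤ p ^ m.factorization p := Nat.pow_le_pow_right hprime.pos hk
    obtain ⟨g, hg⟩ := (Equiv.Perm.exists_with_cycleType_iff (Fin n) (m := ms)).mpr
      ⟨by rw [hsum, Fintype.card_fin]; exact h, h2⟩
    refine ⟨g, ?_⟩
    rw [← Equiv.Perm.lcm_cycleType, hg]
    have hd1 : ms.lcm ∣ m := by
      apply Multiset.lcm_dvd.mpr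
      intro x hx
      obtain ⟨p, hp, rfl⟩ := Multiset.mem_map.mp hx
      exact Nat.ordProj_dvd m p
    have hlcm0 : ms.lcm ≠ 0 := by
      intro h0
      rw [h0] at hd1
      exact hm.ne' (Nat.eq_zero_of_zero_dvd hd1)
    have hd2 : m ∣ ms.lcm := by
      rw [← Nat.factorization_le_iff_dvd hm.ne' hlcm0]
      intro p
      by_cases hp : p ∈ m.factorization.support
      · have hprime : p.Prime := Nat.prime_of_mem_primeFactors
          (by rwa [← Nat.support_factorization])
        have hmem : p ^ m.factorization p ∈ ms :=
          Multiset.mem_map.mpr ⟨p, hp, rfl⟩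
        have hdvd : p ^ m.factorization p ∣ ms.lcm := Multiset.dvd_lcm hmem
        exact (Nat.Prime.pow_dvd_iff_le_factorization hprime hlcm0).mp hdvd
      · simp [Finsupp.notMem_support_iff.mp hp]
    exact Nat.dvd_antisymm hd1 hd2
end

section
/- Let n ≥ 3 and, for a positive integer m, let l(m) be the sum of the maximal prime powers dividing m (with l(1)=0). If m is a positive integer with l(m) + 2 ≤ n, then m ∈ ω(Alt_n); and if m is odd with l(m) ≤ n, then m ∈ ω(Alt_n), where ω(Alt_n) denotes the set of element orders of the alternating group Alt_n. -/
private lemma parity_aux (s : Multiset ℕ) (h : ∀ a ∈ s, Odd a) :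
    Even (s.sum + Multiset.card s) := by
  induction s using Multiset.induction_on with
  | empty => simp
  | cons a s ih =>
    have ha : Odd a := h a (Multiset.mem_cons_self a s)
    have hs := ih (fun b hb => h b (Multiset.mem_cons_of_mem hb))
    rw [Multiset.sum_cons, Multiset.card_cons]
    have : a + s.sum + (Multiset.card s + 1) = (a + 1) + (s.sum + Multiset.card s) := by ring
    rw [this]
    exact (Nat.even_add_one.mpr (Nat.not_even_iff_odd.mpr ha)).add hs

private lemma exists_of_cycleType (n m : ℕ) (s : Multiset ℕ)
    (hsum : s.sum ≤ n) (h2 : ∀ a ∈ s, 2 ≤ a) (hlcm : s.lcm = m)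
    (hpar : Even (s.sum + Multiset.card s)) :
    ∃ σ : alternatingGroup (Fin n), orderOf σ = m := by
  obtain ⟨g, hg⟩ := (Equiv.Perm.exists_with_cycleType_iff (Fin n)).mpr
    ⟨by simpa using hsum, h2⟩
  have hsign : Equiv.Perm.sign g = 1 := by
    rw [Equiv.Perm.sign_of_cycleType, hg]
    exact Even.neg_one_pow hpar
  refine ⟨⟨g, Equiv.Perm.mem_alternatingGroup.mpr hsign⟩, ?_⟩
  have : orderOf ((⟨g, Equiv.Perm.mem_alternatingGroup.mpr hsign⟩ :
      alternatingGroup (Fin n)) : Equiv.Perm (Fin n)) = orderOf g := rfl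
  rw [← orderOf_submonoid, ← Equiv.Perm.lcm_cycleType, hg, hlcm]

theorem stmt_17 (n : ℕ) (hn : 3 ≤ n) (m : ℕ) (hm : 0 < m) :
    (minDeg m + 2 ≤ n → ∃ σ : alternatingGroup (Fin n), orderOf σ = m) ∧
    (Odd m → minDeg m ≤ n → ∃ σ : alternatingGroup (Fin n), orderOf σ = m) := by
  set s : Multiset ℕ := m.factorization.support.val.map
    (fun p => p ^ m.factorization p) with hs
  have hsum : s.sum = minDeg m := rfl
  have h2 : ∀ a ∈ s, 2 ≤ a := by
    intro a ha
    rw [hs, Multiset.mem_map] at ha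
    obtain ⟨p, hp, rfl⟩ := ha
    have hp' : p.Prime := Nat.prime_of_mem_primeFactors hp
    have hk : m.factorization p ≠ 0 := Finsupp.mem_support_iff.mp (by simpa using hp)
    calc 2 ≤ p := hp'.two_le
    _ ≤ p ^ m.factorization p := Nat.le_self_pow hk p
  have hdvd : ∀ a ∈ s, a ∣ m := by
    intro a ha
    rw [hs, Multiset.mem_map] at ha
    obtain ⟨p, hp, rfl⟩ := ha
    exact Nat.ordProj_dvd m p
  have hlcm : s.lcm = m := by
    have h1 : s.lcm ∣ m := Multiset.lcm_dvd.mpr hdvd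
    have hne : s.lcm ≠ 0 := by
      intro h0
      exact hm.ne' (Nat.eq_zero_of_zero_dvd (h0 ▸ h1))
    refine Nat.dvd_antisymm h1 ?_
    rw [← Nat.factorization_le_iff_dvd hm.ne' hne]
    intro q
    by_cases hq : q ∈ m.factorization.support
    · have hmem : q ^ m.factorization q ∈ s := by
        rw [hs, Multiset.mem_map]; exact ⟨q, by simpa using hq, rfl⟩
      have hq' : q.Prime := Nat.prime_of_mem_primeFactors (by
        simpa [Nat.support_factorization] using hq)
      exact (Nat.Prime.pow_dvd_iff_le_factorization hq' hne).mp
        (Multiset.dvd_lcm hmem)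
    · simp [Finsupp.notMem_support_iff.mp hq]
  constructor
  · intro hle
    by_cases hpar : Even (s.sum + Multiset.card s)
    · exact exists_of_cycleType n m s (hsum ▸ le_trans (Nat.le_add_right _ 2) hle)
        h2 hlcm hpar
    · -- some even element, so 2 ∣ m
      have h2m : 2 ∣ m := by
        by_contra h2m
        exact hpar (parity_aux s (fun a ha => by
          rcases Nat.even_or_odd a with he | ho
          · exact absurd (he.two_dvd.trans (hdvd a ha)) h2m
          · exact ho))
      refine exists_of_cycleType n m (2 ::ₘ s) ?_ ?_ ?_ ?_
      · rw [Multiset.sum_cons, hsum]; omega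
      · intro a ha
        rcases Multiset.mem_cons.mp ha with rfl | ha
        · exact le_refl 2
        · exact h2 a ha
      · rw [Multiset.lcm_cons, hlcm]
        simpa [lcm] using Nat.dvd_antisymm (Nat.lcm_dvd h2m dvd_rfl) (Nat.dvd_lcm_right 2 m)
      · rw [Multiset.sum_cons, Multiset.card_cons]
        have : 2 + s.sum + (Multiset.card s + 1) = (s.sum + Multiset.card s) + 3 := by ring
        rw [this]
        obtain ⟨k, hk⟩ := Nat.not_even_iff_odd.mp hpar
        exact ⟨k + 2, by omega⟩
  · intro hodd hle
    refine exists_of_cycleType n m s (hsum ▸ hle) h2 hlcm (parity_aux s ?_)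
    intro a ha
    rcases Nat.even_or_odd a with he | ho
    · have hem : Even m := (even_iff_two_dvd).mpr (he.two_dvd.trans (hdvd a ha))
      exact absurd hem (Nat.not_even_iff_odd.mpr hodd)
    · exact ho
end
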